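/- Let μ be a Borel probability measure on a compact metric space X and W ⊂ X a closed set. Then for every ε > 0 there exists 0 < t₀ < ε and D > 0 such that the set W' = {x : d(x, W) = t₀} satisfies μ(N_h(W')) ≤ D·h for all h > 0. -/
import Mathlib

open MeasureTheory Metric Filter Topology ENNReal

theorem stmt8 {X : Type*} [MetricSpace X] [CompactSpace X] [MeasurableSpace X] [BorelSpace X]
    (μ : Measure X) [IsProbabilityMeasure μ] (W : Set X) (hW : IsClosed W)
    (ε : ℝ) (hε : 0 < ε) :
    ∃ t₀ : ℝ, 0 < t₀ ∧ t₀ < ε ∧ ∃ D > 0, ∀ h : ℝ, 0 < h →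
      μ (Metric.thickening h {x : X | Metric.infDist x W = t₀}) ≤ ENNReal.ofReal (D * h) := by
  set f : X → ℝ := fun x => Metric.infDist x W with hf_def
  have hf : LipschitzWith 1 f := lipschitz_infDist_pt W
  have hfm : Measurable f := hf.continuous.measurable
  set ν : Measure ℝ := μ.map f with hν_def
  have hνprob : IsProbabilityMeasure ν := Measure.isProbabilityMeasure_map hfm.aemeasurable
  have h1 := Besicovitch.ae_tendsto_rnDeriv ν (volume : Measure ℝ)
  have h2 := Measure.rnDeriv_lt_top ν (volume : Measure ℝ)
  have hres : (volume.restrict (Set.Ioo (0:ℝ) ε)) ≠ 0 := by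
    intro h
    have := Measure.restrict_apply_self (volume : Measure ℝ) (Set.Ioo (0:ℝ) ε)
    rw [h] at this
    simp only [Measure.coe_zero, Pi.zero_apply, Real.volume_Ioo] at this
    rw [eq_comm, ENNReal.ofReal_eq_zero] at this
    linarith
  haveI hne : (Filter.NeBot (ae (volume.restrict (Set.Ioo (0:ℝ) ε)))) := ae_neBot.2 hres
  obtain ⟨t₀, ht₀, htend, hfin⟩ :=
    (((ae_restrict_mem (measurableSet_Ioo : MeasurableSet (Set.Ioo (0:ℝ) ε))).and
      ((h1.and h2).filter_mono (ae_mono Measure.restrict_le_self)))).exists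
  refine ⟨t₀, ht₀.1, ht₀.2, ?_⟩
  set c : ℝ≥0∞ := ν.rnDeriv volume t₀ with hc
  have hev : ∀ᶠ r in 𝓝[>] (0:ℝ),
      ν (closedBall t₀ r) / volume (closedBall t₀ r) < c + 1 := by
    have : c < c + 1 := ENNReal.lt_add_right hfin.ne one_ne_zero
    exact htend.eventually_lt_const this
  obtain ⟨r₁, hr₁pos, hr₁⟩ := mem_nhdsGT_iff_exists_Ioc_subset.mp hev
  -- key bound on ν of closed balls of radius ≤ r₁
  have key : ∀ r : ℝ, 0 < r → r ≤ r₁ →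
      ν (closedBall t₀ r) ≤ ENNReal.ofReal ((c.toReal + 1) * (2 * r)) := by
    intro r hr hrr
    have hmem : ν (closedBall t₀ r) / volume (closedBall t₀ r) < c + 1 := hr₁ ⟨hr, hrr⟩
    have hvol : volume (closedBall t₀ r) = ENNReal.ofReal (2 * r) := by
      rw [Real.volume_closedBall]
    have hvpos : volume (closedBall t₀ r) ≠ 0 := by
      rw [hvol]; simp [ENNReal.ofReal_eq_zero]; linarith
    have hvtop : volume (closedBall t₀ r) ≠ ∞ := by rw [hvol]; exact ofReal_ne_top
    have := (ENNReal.div_lt_iff (Or.inl hvpos) (Or.inl hvtop)).mp hmem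
    calc ν (closedBall t₀ r) ≤ (c + 1) * volume (closedBall t₀ r) := this.le
      _ = ENNReal.ofReal (c.toReal + 1) * ENNReal.ofReal (2 * r) := by
          rw [hvol, ENNReal.ofReal_add (ENNReal.toReal_nonneg) zero_le_one,
            ENNReal.ofReal_toReal hfin.ne, ENNReal.ofReal_one]
      _ = ENNReal.ofReal ((c.toReal + 1) * (2 * r)) := by
          rw [← ENNReal.ofReal_mul (by positivity : (0:ℝ) ≤ c.toReal + 1)]
  -- choose D
  set D : ℝ := max (2 * (c.toReal + 1)) (1 / r₁) with hD
  have hr₁pos' : (0:ℝ) < r₁ := hr₁pos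
  have hDpos : 0 < D := lt_max_of_lt_right (by positivity)
  refine ⟨D, hDpos, ?_⟩
  intro h hh
  -- thickening maps into preimage of ball
  have hsub : Metric.thickening h {x : X | f x = t₀} ⊆ f ⁻¹' (ball t₀ h) := by
    intro x hx
    obtain ⟨y, hy, hxy⟩ := Metric.mem_thickening_iff.mp hx
    have : dist (f x) (f y) ≤ dist x y := by
      simpa using hf.dist_le_mul x y
    simp only [Set.mem_setOf_eq] at hy
    simp only [Set.mem_preimage, mem_ball]
    calc dist (f x) t₀ = dist (f x) (f y) := by rw [hy]
      _ ≤ dist x y := this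
      _ < h := hxy
  have hmeas : μ (Metric.thickening h {x : X | f x = t₀}) ≤ ν (ball t₀ h) := by
    rw [hν_def, Measure.map_apply hfm measurableSet_ball]
    exact measure_mono hsub
  refine le_trans hmeas ?_
  rcases le_or_gt h r₁ with hcase | hcase
  · refine le_trans (measure_mono ball_subset_closedBall) ?_
    refine le_trans (key h hh hcase) (ENNReal.ofReal_le_ofReal ?_)
    have : 2 * (c.toReal + 1) ≤ D := le_max_left _ _
    calc (c.toReal + 1) * (2 * h) = (2 * (c.toReal + 1)) * h := by ring
      _ ≤ D * h := by nlinarith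
  · have h1le : ν (ball t₀ h) ≤ 1 := prob_le_one
    refine le_trans h1le ?_
    rw [show (1:ℝ≥0∞) = ENNReal.ofReal 1 from (ENNReal.ofReal_one).symm]
    apply ENNReal.ofReal_le_ofReal
    have : 1 / r₁ ≤ D := le_max_right _ _
    rw [div_le_iff₀ hr₁pos'] at this
    nlinarith
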